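/- arXiv:1910.03543 — 3 statements merged into one kernel-verified Lean document; each statement's English description precedes it below -/
import Mathlib

section
/- For positive reals q_MIL, q_EES, γ, ρ_A, α, ρ_Q with q_MIL > q_EES = 1/2, the inequality (q_MIL·γρ_A·αρ_Q)/((2αρ_Q+γρ_A)q_MIL + γρ_A·αρ_Q) > (q_EES·γρ_A·αρ_Q)/((αρ_Q+γρ_A)q_EES + γρ_A·αρ_Q) holds if and only if γρ_A > q_MIL/(2q_MIL − 1). -/
/-- Comparison of the effective orders of convergence of the Milstein scheme
and the exponential Euler scheme: for positive parameters with
`q_EES = 1/2 < q_MIL`, the Milstein EOC exceeds the EES EOC iff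
`γ·ρ_A > q_MIL / (2·q_MIL − 1)`. -/
theorem stmt0 (qM qE γ ρA α ρQ : ℝ)
    (hqM : 0 < qM) (hqE : 0 < qE) (hγ : 0 < γ) (hρA : 0 < ρA)
    (hα : 0 < α) (hρQ : 0 < ρQ)
    (hE : qE = 1 / 2) (hlt : qE < qM) :
    (qM * (γ * ρA) * (α * ρQ)) /
        ((2 * (α * ρQ) + γ * ρA) * qM + (γ * ρA) * (α * ρQ)) >
      (qE * (γ * ρA) * (α * ρQ)) /
        ((α * ρQ + γ * ρA) * qE + (γ * ρA) * (α * ρQ)) ↔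
    γ * ρA > qM / (2 * qM - 1) := by
  subst hE
  have ha : 0 < γ * ρA := mul_pos hγ hρA
  have hb : 0 < α * ρQ := mul_pos hα hρQ
  have hd1 : 0 < (2 * (α * ρQ) + γ * ρA) * qM + (γ * ρA) * (α * ρQ) := by positivity
  have hd2 : 0 < (α * ρQ + γ * ρA) * (1/2) + (γ * ρA) * (α * ρQ) := by positivity
  have h2q : 0 < 2 * qM - 1 := by linarith
  rw [gt_iff_lt, div_lt_div_iff₀ hd2 hd1, gt_iff_lt, div_lt_iff₀ h2q]
  have key : qM * (γ * ρA) * (α * ρQ) * ((α * ρQ + γ * ρA) * (1/2) + (γ * ρA) * (α * ρQ))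
      - 1/2 * (γ * ρA) * (α * ρQ) * ((2 * (α * ρQ) + γ * ρA) * qM + (γ * ρA) * (α * ρQ))
      = ((γ * ρA) * (α * ρQ) * (α * ρQ) / 2) * ((γ * ρA) * (2 * qM - 1) - qM) := by ring
  have hc : 0 < (γ * ρA) * (α * ρQ) * (α * ρQ) / 2 := by positivity
  constructor
  · intro h
    have := sub_pos.mpr h
    rw [key] at this
    have := mul_pos_iff.mp this
    rcases this with ⟨_, h2⟩ | ⟨h1, _⟩
    · linarith
    · linarith
  · intro h
    have : 0 < ((γ * ρA) * (α * ρQ) * (α * ρQ) / 2) * ((γ * ρA) * (2 * qM - 1) - qM) :=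
      mul_pos hc (by linarith)
    rw [← key] at this
    linarith
end

section
/- For q > 1/2 and α, ρ_Q, γ, ρ_A > 0 with ρ_Q > 1, under the additional condition (2αρ_Q − 3)q ≥ αρ_Q, the effective order αρ_Q q/(αρ_Q(q+1/2) + (5/2)q) from MIL2 (case M2C3a) is at least the effective order αρ_Q/(2αρ_Q+1) from MIL1 (case M1C1). -/
/-- Comparison of effective orders: for `q > 1/2` and positive parameters with
`ρ_Q > 1`, if `(2αρ_Q − 3)q ≥ αρ_Q` then the MIL2 (M2C3a) effective order
`αρ_Q·q/(αρ_Q(q+1/2) + (5/2)q)` is at least the MIL1 (M1C1) effective order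
`αρ_Q/(2αρ_Q+1)`. -/
theorem stmt10 (α ρQ γ ρA q : ℝ)
    (hα : 0 < α) (hρQ : 1 < ρQ) (hγ : 0 < γ) (hρA : 0 < ρA)
    (hq : 1 / 2 < q)
    (hcond : α * ρQ ≤ (2 * (α * ρQ) - 3) * q) :
    α * ρQ / (2 * (α * ρQ) + 1) ≤
      α * ρQ * q / (α * ρQ * (q + 1 / 2) + 5 / 2 * q) := by
  have hA : 0 < α * ρQ := by positivity
  have hq0 : 0 < q := by linarith
  rw [div_le_div_iff₀ (by positivity) (by positivity)]
  nlinarith [mul_pos hA hq0]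
end

section
/- For q > 1/2 and α, ρ_Q, γ, ρ_A > 0 with ρ_Q > 1, under the additional condition α(2q−1) ≥ 2q, the effective order αρ_Q q/(αρ_Q(q+1/2) + q(ρ_Q+1)) from MIL2 (case M2C3b) is at least the effective order αρ_Q/(2αρ_Q+1) from MIL1 (case M1C1). -/
/-- Comparison of effective orders: for `q > 1/2` and positive parameters with
`ρ_Q > 1`, if `α(2q−1) ≥ 2q` then the MIL2 (M2C3b) effective order
`αρ_Q·q/(αρ_Q(q+1/2) + q(ρ_Q+1))` is at least the MIL1 (M1C1) effective order
`αρ_Q/(2αρ_Q+1)`. -/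
theorem stmt11 (α ρQ γ ρA q : ℝ)
    (hα : 0 < α) (hρQ : 1 < ρQ) (hγ : 0 < γ) (hρA : 0 < ρA)
    (hq : 1 / 2 < q)
    (hcond : 2 * q ≤ α * (2 * q - 1)) :
    α * ρQ / (2 * (α * ρQ) + 1) ≤
      α * ρQ * q / (α * ρQ * (q + 1 / 2) + q * (ρQ + 1)) := by
  have hρQ0 : (0:ℝ) < ρQ := by linarith
  have hq0 : (0:ℝ) < q := by linarith
  have h1 : (0:ℝ) < 2 * (α * ρQ) + 1 := by positivity
  have h2 : (0:ℝ) < α * ρQ * (q + 1 / 2) + q * (ρQ + 1) := by positivity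
  rw [div_le_div_iff₀ h1 h2]
  nlinarith [mul_pos hα hρQ0, mul_nonneg hρQ0.le (sub_nonneg.2 hcond)]
end
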